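/- Discrete comparison principle: let Λ be a discrete operator of positive type (as defined in the context) whose coefficients additionally satisfy, for every interior index 1 ≤ i ≤ N−1 and every component 1 ≤ k ≤ M, the row-sum bound r_i^{k,−} + r_i^{k,c} + r_i^{k,+} + (Δt/2) Σ_{m≠k} ( q_i^{k,−}a_{km}(x_{i−1}) + q_i^{k,c}a_{km}(x_i) + q_i^{k,+}a_{km}(x_{i+1}) ) ≥ 1. If V, W : {0,…,N} → ℝ^M are mesh functions with (ΛV)_{k,i} ≥ (ΛW)_{k,i} for all 1 ≤ i ≤ N−1 and all k, and V_{k,0} ≥ W_{k,0}, V_{k,N} ≥ W_{k,N} for all k, then V_{k,i} ≥ W_{k,i} for all 0 ≤ i ≤ N and all k. -/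
import Mathlib


/-- The discrete operator `Λ` at an interior node `i`, component `k`:
`(ΛV)_{k,i} = r⁻V_{k,i−1} + r^cV_{k,i} + r⁺V_{k,i+1}
  + (Δt/2) Σ_{m≠k} [q⁻a_{km}(x_{i−1})V_{m,i−1} + q^c a_{km}(x_i)V_{m,i}
  + q⁺a_{km}(x_{i+1})V_{m,i+1}]`. -/
noncomputable def discOp (M : ℕ) (Δt : ℝ) (x : ℕ → ℝ)
    (a : Fin M → Fin M → ℝ → ℝ)
    (rm rc rp qm qc qp : ℕ → Fin M → ℝ)
    (V : ℕ → Fin M → ℝ) (k : Fin M) (i : ℕ) : ℝ :=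
  rm i k * V (i-1) k + rc i k * V i k + rp i k * V (i+1) k
    + (Δt/2) * ∑ m ∈ Finset.univ \ {k},
        (qm i k * a k m (x (i-1)) * V (i-1) m
          + qc i k * a k m (x i) * V i m
          + qp i k * a k m (x (i+1)) * V (i+1) m)

set_option maxHeartbeats 1000000 in
/-- Discrete comparison principle for a positive-type operator with row sums
at least `1`. -/
theorem stmt_14
    (M : ℕ) (hM : 2 ≤ M) (N : ℕ) (hN : 1 ≤ N)
    (Δt : ℝ) (hΔt : 0 < Δt)
    (x : ℕ → ℝ) (hx0 : x 0 = 0) (hxN : x N = 1)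
    (hx_mono : ∀ i, i < N → x i < x (i+1))
    (a : Fin M → Fin M → ℝ → ℝ)
    (ha_cont : ∀ k m, ContinuousOn (a k m) (Set.Icc 0 1))
    (ha_off : ∀ k m, k ≠ m → ∀ y ∈ Set.Icc (0:ℝ) 1, a k m y ≤ 0)
    (rm rc rp qm qc qp : ℕ → Fin M → ℝ)
    (h_pos : ∀ i : ℕ, 1 ≤ i → i ≤ N - 1 → ∀ k,
      rm i k ≤ 0 ∧ rp i k ≤ 0 ∧ 0 < rc i k ∧
      0 ≤ qm i k ∧ 0 ≤ qc i k ∧ 0 ≤ qp i k)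
    (h_rowsum : ∀ i : ℕ, 1 ≤ i → i ≤ N - 1 → ∀ k,
      1 ≤ rm i k + rc i k + rp i k
        + (Δt/2) * ∑ m ∈ Finset.univ \ {k},
            (qm i k * a k m (x (i-1)) + qc i k * a k m (x i)
              + qp i k * a k m (x (i+1))))
    (V W : ℕ → Fin M → ℝ)
    (h_int : ∀ i : ℕ, 1 ≤ i → i ≤ N - 1 → ∀ k,
      discOp M Δt x a rm rc rp qm qc qp W k i
        ≤ discOp M Δt x a rm rc rp qm qc qp V k i)
    (h_bd0 : ∀ k, W 0 k ≤ V 0 k)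
    (h_bdN : ∀ k, W N k ≤ V N k) :
    ∀ i : ℕ, i ≤ N → ∀ k, W i k ≤ V i k := by
  -- monotonicity of mesh points
  have hmono : ∀ p q : ℕ, p ≤ q → q ≤ N → x p ≤ x q := by
    intro p q hpq hqN
    induction q with
    | zero =>
      interval_cases p
      exact le_rfl
    | succ n ih =>
      rcases Nat.eq_or_lt_of_le hpq with h | h
      · rw [h]
      · have hpn : p ≤ n := Nat.lt_succ_iff.mp h
        have h1 : x p ≤ x n := ih hpn (by omega)
        have h2 : x n < x (n+1) := hx_mono n (by omega)
        linarith
  have hx01 : ∀ j, j ≤ N → x j ∈ Set.Icc (0:ℝ) 1 := by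
    intro j hj
    constructor
    · rw [← hx0]; exact hmono 0 j (Nat.zero_le j) hj
    · rw [← hxN]; exact hmono j N hj le_rfl
  haveI hne : Nonempty (Fin M) := ⟨⟨0, by omega⟩⟩
  obtain ⟨p, hp_mem, hp_min⟩ := Finset.exists_min_image
    ((Finset.range (N+1)) ×ˢ (Finset.univ : Finset (Fin M)))
    (fun p => V p.1 p.2 - W p.1 p.2)
    ⟨(0, Classical.arbitrary (Fin M)), by simp [Finset.mem_product, Nat.succ_pos]⟩
  obtain ⟨i₀, k₀⟩ := p
  simp only [Finset.mem_product, Finset.mem_range, Finset.mem_univ, and_true,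
    Nat.lt_succ_iff] at hp_mem
  have hmin : ∀ i, i ≤ N → ∀ k, V i₀ k₀ - W i₀ k₀ ≤ V i k - W i k := by
    intro i hi k
    exact hp_min (i, k) (by simp [Finset.mem_product, Nat.lt_succ_iff, hi])
  set μ := V i₀ k₀ - W i₀ k₀ with hμ
  suffices h : 0 ≤ μ by
    intro i hi k
    have := hmin i hi k
    linarith
  by_contra hneg
  push_neg at hneg
  have hi0 : i₀ ≠ 0 := by
    intro h
    have := h_bd0 k₀
    rw [h] at hμ
    linarith
  have hiN : i₀ ≠ N := by
    intro h
    have := h_bdN k₀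
    rw [h] at hμ
    linarith
  have hi1 : 1 ≤ i₀ := by omega
  have hi2 : i₀ ≤ N - 1 := by omega
  have hip1 : i₀ + 1 ≤ N := by omega
  have him1 : i₀ - 1 ≤ N := by omega
  obtain ⟨hrm, hrp, hrc, hqm, hqc, hqp⟩ := h_pos i₀ hi1 hi2 k₀
  have hD := h_int i₀ hi1 hi2 k₀
  -- abbreviations
  set s : Finset (Fin M) := Finset.univ \ {k₀} with hs
  -- expand the difference of the two operators
  have hsum_eq :
      (∑ m ∈ s, (qm i₀ k₀ * a k₀ m (x (i₀-1)) * V (i₀-1) m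
          + qc i₀ k₀ * a k₀ m (x i₀) * V i₀ m
          + qp i₀ k₀ * a k₀ m (x (i₀+1)) * V (i₀+1) m))
      - (∑ m ∈ s, (qm i₀ k₀ * a k₀ m (x (i₀-1)) * W (i₀-1) m
          + qc i₀ k₀ * a k₀ m (x i₀) * W i₀ m
          + qp i₀ k₀ * a k₀ m (x (i₀+1)) * W (i₀+1) m))
      = ∑ m ∈ s, (qm i₀ k₀ * a k₀ m (x (i₀-1)) * (V (i₀-1) m - W (i₀-1) m)
          + qc i₀ k₀ * a k₀ m (x i₀) * (V i₀ m - W i₀ m)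
          + qp i₀ k₀ * a k₀ m (x (i₀+1)) * (V (i₀+1) m - W (i₀+1) m)) := by
    rw [← Finset.sum_sub_distrib]
    exact Finset.sum_congr rfl fun m _ => by ring
  have hdiff :
      discOp M Δt x a rm rc rp qm qc qp V k₀ i₀
        - discOp M Δt x a rm rc rp qm qc qp W k₀ i₀
      = rm i₀ k₀ * (V (i₀-1) k₀ - W (i₀-1) k₀)
        + rc i₀ k₀ * (V i₀ k₀ - W i₀ k₀)
        + rp i₀ k₀ * (V (i₀+1) k₀ - W (i₀+1) k₀)
        + (Δt/2) * ∑ m ∈ s,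
            (qm i₀ k₀ * a k₀ m (x (i₀-1)) * (V (i₀-1) m - W (i₀-1) m)
              + qc i₀ k₀ * a k₀ m (x i₀) * (V i₀ m - W i₀ m)
              + qp i₀ k₀ * a k₀ m (x (i₀+1)) * (V (i₀+1) m - W (i₀+1) m)) := by
    simp only [discOp, ← hs]
    linear_combination (Δt/2) * hsum_eq
  -- termwise bound inside the sum
  have hsum_le :
      (∑ m ∈ s, (qm i₀ k₀ * a k₀ m (x (i₀-1)) * (V (i₀-1) m - W (i₀-1) m)
          + qc i₀ k₀ * a k₀ m (x i₀) * (V i₀ m - W i₀ m)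
          + qp i₀ k₀ * a k₀ m (x (i₀+1)) * (V (i₀+1) m - W (i₀+1) m)))
      ≤ (∑ m ∈ s, (qm i₀ k₀ * a k₀ m (x (i₀-1)) + qc i₀ k₀ * a k₀ m (x i₀)
          + qp i₀ k₀ * a k₀ m (x (i₀+1)))) * μ := by
    rw [Finset.sum_mul]
    apply Finset.sum_le_sum
    intro m hm
    have hmk : k₀ ≠ m := by
      simp only [hs, Finset.mem_sdiff, Finset.mem_singleton] at hm
      exact fun h => hm.2 h.symm
    have ham : a k₀ m (x (i₀-1)) ≤ 0 := ha_off k₀ m hmk _ (hx01 _ him1)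
    have hac : a k₀ m (x i₀) ≤ 0 := ha_off k₀ m hmk _ (hx01 _ hp_mem)
    have hap : a k₀ m (x (i₀+1)) ≤ 0 := ha_off k₀ m hmk _ (hx01 _ hip1)
    have h1 := hmin (i₀-1) him1 m
    have h2 := hmin i₀ hp_mem m
    have h3 := hmin (i₀+1) hip1 m
    have b1 : qm i₀ k₀ * a k₀ m (x (i₀-1)) * (V (i₀-1) m - W (i₀-1) m)
        ≤ qm i₀ k₀ * a k₀ m (x (i₀-1)) * μ := by
      apply mul_le_mul_of_nonpos_left (by linarith) (by nlinarith)
    have b2 : qc i₀ k₀ * a k₀ m (x i₀) * (V i₀ m - W i₀ m)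
        ≤ qc i₀ k₀ * a k₀ m (x i₀) * μ := by
      apply mul_le_mul_of_nonpos_left (by linarith) (by nlinarith)
    have b3 : qp i₀ k₀ * a k₀ m (x (i₀+1)) * (V (i₀+1) m - W (i₀+1) m)
        ≤ qp i₀ k₀ * a k₀ m (x (i₀+1)) * μ := by
      apply mul_le_mul_of_nonpos_left (by linarith) (by nlinarith)
    linarith
  set S : ℝ := ∑ m ∈ s, (qm i₀ k₀ * a k₀ m (x (i₀-1)) + qc i₀ k₀ * a k₀ m (x i₀)
      + qp i₀ k₀ * a k₀ m (x (i₀+1))) with hS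
  have hrow := h_rowsum i₀ hi1 hi2 k₀
  rw [← hs, ← hS] at hrow
  have h1 := hmin (i₀-1) him1 k₀
  have h3 := hmin (i₀+1) hip1 k₀
  have bm : rm i₀ k₀ * (V (i₀-1) k₀ - W (i₀-1) k₀) ≤ rm i₀ k₀ * μ :=
    mul_le_mul_of_nonpos_left (by linarith) hrm
  have bp : rp i₀ k₀ * (V (i₀+1) k₀ - W (i₀+1) k₀) ≤ rp i₀ k₀ * μ :=
    mul_le_mul_of_nonpos_left (by linarith) hrp
  have hfinal :
      discOp M Δt x a rm rc rp qm qc qp V k₀ i₀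
        - discOp M Δt x a rm rc rp qm qc qp W k₀ i₀
      ≤ μ * (rm i₀ k₀ + rc i₀ k₀ + rp i₀ k₀ + (Δt/2) * S) := by
    rw [hdiff]
    have hmul : (Δt/2) * (∑ m ∈ s,
        (qm i₀ k₀ * a k₀ m (x (i₀-1)) * (V (i₀-1) m - W (i₀-1) m)
          + qc i₀ k₀ * a k₀ m (x i₀) * (V i₀ m - W i₀ m)
          + qp i₀ k₀ * a k₀ m (x (i₀+1)) * (V (i₀+1) m - W (i₀+1) m)))
        ≤ (Δt/2) * (S * μ) := by
      apply mul_le_mul_of_nonneg_left hsum_le (by linarith)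
    have hc : rc i₀ k₀ * (V i₀ k₀ - W i₀ k₀) = rc i₀ k₀ * μ := by rw [hμ]
    have hring : μ * (rm i₀ k₀ + rc i₀ k₀ + rp i₀ k₀ + (Δt/2) * S)
        = rm i₀ k₀ * μ + rc i₀ k₀ * μ + rp i₀ k₀ * μ + (Δt/2) * (S * μ) := by
      ring
    rw [hring]
    exact add_le_add (add_le_add (add_le_add bm hc.le) bp) hmul
  have hlast : μ * (rm i₀ k₀ + rc i₀ k₀ + rp i₀ k₀ + (Δt/2) * S) ≤ μ := by
    have := mul_le_mul_of_nonpos_left hrow (le_of_lt hneg)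
    linarith
  linarith
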